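/- Let V be a finite set and let F ⊆ V×V be such that F = Arcs C for some path cover C of V. Then the number of permutations σ of V satisfying F ⊆ A_σ equals |C|! (the factorial of the number of paths in C), where A_σ := {(v,σ(v)) : v ∈ V}. -/

import Mathlib

open scoped Classical

noncomputable section

/-- The power sum `p_k = x_1^k + x_2^k + ⋯` as a formal power series over `R`
in countably many variables indexed by the positive integers. -/
def pSumR (R : Type) [CommRing R] (k : ℕ) : MvPowerSeries ℕ+ R :=
  fun d => if ∃ i : ℕ+, d = Finsupp.single i k then 1 else 0

/-- The power sum `p_k` over `ℤ`. -/
def pSum (k : ℕ) : MvPowerSeries ℕ+ ℤ := pSumR ℤ k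

/-- The fundamental quasisymmetric function `L_{I,n}` (with positions 0-indexed):
its coefficient at a monomial `d` is the number of weakly increasing `n`-tuples
`(i_0, …, i_{n-1})` of positive integers, strictly increasing at the positions in `I`,
whose associated monomial `x_{i_0} ⋯ x_{i_{n-1}}` is `d`. -/
def Lfun (n : ℕ) (I : Set ℕ) : MvPowerSeries ℕ+ ℤ :=
  fun d =>
    ((Set.ncard {i : Fin n → ℕ+ |
        Monotone i ∧
        (∀ (p : ℕ) (h : p + 1 < n), p ∈ I → i ⟨p, Nat.lt_of_succ_lt h⟩ < i ⟨p + 1, h⟩) ∧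
        (∑ k : Fin n, Finsupp.single (i k) 1) = d}) : ℤ)

/-- The descent set `Des(w, D)` (0-indexed) of the `V`-listing `w = (e 0, e 1, …, e (n-1))`
with respect to the digraph with arc set `A`. -/
def descents {V : Type} (A : Set (V × V)) {n : ℕ} (e : Fin n ≃ V) : Set ℕ :=
  {p | ∃ h : p + 1 < n, (e ⟨p, Nat.lt_of_succ_lt h⟩, e ⟨p + 1, h⟩) ∈ A}

/-- The Redei–Berge symmetric function `U_D` of the digraph `D = (V, A)`. -/
def redeiBerge (V : Type) [Fintype V] [DecidableEq V] (A : Set (V × V)) :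
    MvPowerSeries ℕ+ ℤ :=
  ∑ e : Fin (Fintype.card V) ≃ V, Lfun (Fintype.card V) (descents A e)

/-- The cycles of a permutation `σ`, each represented by its set of entries
(i.e. by the corresponding orbit of `σ`). -/
def cyclesOf {V : Type} [Fintype V] [DecidableEq V] (σ : Equiv.Perm V) :
    Finset (Finset V) :=
  Finset.univ.image fun v => Finset.univ.filter fun u => σ.SameCycle v u

/-- `p_{type σ}`: the product of `p_{ℓ(γ)}` over all cycles `γ` of `σ`. -/
def pType {V : Type} [Fintype V] [DecidableEq V] (σ : Equiv.Perm V) :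
    MvPowerSeries ℕ+ ℤ :=
  ∏ O ∈ cyclesOf σ, pSum O.card

/-- `φ(σ) = ∑ (ℓ(γ) - 1)`, summed over all cycles `γ` of `σ` that are `D`-cycles.
A cycle of `σ` with orbit `O` is a `D`-cycle iff all its cyclic arcs `(u, σ u)`
(for `u ∈ O`) lie in `A`. -/
def phi {V : Type} [Fintype V] [DecidableEq V] (A : Set (V × V)) (σ : Equiv.Perm V) : ℕ :=
  ∑ O ∈ (cyclesOf σ).filter (fun O => ∀ u ∈ O, (u, σ u) ∈ A), (O.card - 1)

/-- `σ ∈ S_V(D, D̄)`: each cycle of `σ` is a `D`-cycle or a `D̄`-cycle. -/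
def memSVDDbar {V : Type} [Fintype V] [DecidableEq V] (A : Set (V × V))
    (σ : Equiv.Perm V) : Prop :=
  ∀ O ∈ cyclesOf σ, (∀ u ∈ O, (u, σ u) ∈ A) ∨ (∀ u ∈ O, (u, σ u) ∉ A)

/-- `σ ∈ S_V(D)`: each nontrivial cycle of `σ` is a `D`-cycle. -/
def memSVD {V : Type} [Fintype V] [DecidableEq V] (A : Set (V × V))
    (σ : Equiv.Perm V) : Prop :=
  ∀ O ∈ cyclesOf σ, 1 < O.card → ∀ u ∈ O, (u, σ u) ∈ A

/-- `ψ(σ)`: the number of nontrivial cycles of `σ`. -/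
def psi {V : Type} [Fintype V] [DecidableEq V] (σ : Equiv.Perm V) : ℕ :=
  ((cyclesOf σ).filter fun O => 1 < O.card).card

/-- The digraph `(V, A)` is a tournament: no loops, and for any two distinct vertices
`u, v`, exactly one of `(u,v)` and `(v,u)` is an arc. -/
def IsTournament {V : Type} (A : Set (V × V)) : Prop :=
  (∀ u : V, (u, u) ∉ A) ∧ ∀ u v : V, u ≠ v → Xor' ((u, v) ∈ A) ((v, u) ∈ A)

/-- The number of Hamiltonian paths of the digraph `(W, B)` (the empty list counts
as a Hamiltonian path when `W` is empty). -/
def hampCount (W : Type) [Fintype W] (B : Set (W × W)) : ℕ :=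
  Set.ncard {w : List W | w.Nodup ∧ (∀ x : W, x ∈ w) ∧ w.Chain' fun a b => (a, b) ∈ B}

/-- `A_σ = {(v, σ v) : v ∈ V}`. -/
def ApermSet {V : Type} (σ : Equiv.Perm V) : Set (V × V) :=
  Set.range fun v => (v, σ v)

/-- The arc set of a tuple (encoded as a list): the set of its consecutive pairs. -/
def arcsList {V : Type} (p : List V) : Set (V × V) := {a | a ∈ p.zip p.tail}

/-- `C` is a path cover of `V`: a set of paths of `V` (nonempty tuples of distinct
elements) such that each element of `V` belongs to exactly one of these paths. -/
def IsPathCover (V : Type) (C : Set (List V)) : Prop :=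
  (∀ p ∈ C, p ≠ [] ∧ p.Nodup) ∧ ∀ v : V, ∃! p, p ∈ C ∧ v ∈ p

/-- The arc set of a path cover. -/
def arcsCover {V : Type} (C : Set (List V)) : Set (V × V) :=
  ⋃ p ∈ C, arcsList p

/-- A subset `F ⊆ V × V` is linear if it is the arc set of some path cover of `V`. -/
def IsLinear (V : Type) (F : Set (V × V)) : Prop :=
  ∃ C : Set (List V), IsPathCover V C ∧ F = arcsCover C

/-!
The arcs of a path cover form the graph of a partial injection of `V`: a vertex has at most one
successor and at most one predecessor, and exactly the last vertices of the paths have no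
successor. The permutations extending a partial injection defined on `s` form a left coset of
the pointwise stabiliser of `s`, which is a copy of the symmetric group of `sᶜ`; hence there are
`|sᶜ|!` of them, and here `|sᶜ| = |C|`.
-/

namespace Equiv.Perm

variable {α : Type*} [Fintype α]

theorem ncard_setOf_forall_mem_apply_eq_self (s : Set α) :
    {σ : Perm α | ∀ a ∈ s, σ a = a}.ncard = sᶜ.ncard.factorial := by
  have hrange : {σ : Perm α | ∀ a ∈ s, σ a = a} =
      Set.range (ofSubtype : Perm (sᶜ : Set α) →* Perm α) := by
    ext σ
    rw [← MonoidHom.coe_range, SetLike.mem_coe, mem_range_ofSubtype_iff]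
    simp only [Set.mem_ofPred_eq, Set.subset_def, Finset.mem_coe, mem_support]
    exact ⟨fun h a ha has => ha (h a has), fun h a has => not_not.mp fun ha => h a ha has⟩
  rw [hrange, Set.ncard_range_of_injective ofSubtype_injective, Nat.card_perm,
    Nat.card_coe_set_eq]

theorem ncard_setOf_forall_mem_apply_eq {s : Set α} {f : α → α} (hf : s.InjOn f) :
    {σ : Perm α | ∀ a ∈ s, σ a = f a}.ncard = sᶜ.ncard.factorial := by
  obtain ⟨τ, hτ⟩ := exists_extending_pair ((↑) : s → α) (fun a => f a)
    Subtype.val_injective hf.injective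
  have hcoset : {σ : Perm α | ∀ a ∈ s, σ a = f a} = (τ * ·) '' {σ | ∀ a ∈ s, σ a = a} := by
    ext σ
    simp only [Set.image_mul_left, Set.mem_preimage, Set.mem_ofPred_eq, Perm.mul_apply,
      inv_eq_iff_eq]
    exact forall₂_congr fun a ha => by rw [← hτ ⟨a, ha⟩, eq_comm]
  rw [hcoset, Set.ncard_image_of_injective _ (mul_right_injective τ),
    ncard_setOf_forall_mem_apply_eq_self]

end Equiv.Perm

theorem mem_ApermSet {V : Type} {σ : Equiv.Perm V} {a b : V} :
    (a, b) ∈ ApermSet σ ↔ σ a = b := by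
  simp [ApermSet]

theorem ncard_setOf_subset_ApermSet {V : Type} [Fintype V] {F : Set (V × V)}
    (hright : ∀ {a b c}, (a, b) ∈ F → (a, c) ∈ F → b = c)
    (hleft : ∀ {a b c}, (a, c) ∈ F → (b, c) ∈ F → a = b) :
    {σ : Equiv.Perm V | F ⊆ ApermSet σ}.ncard = {a | ∀ b, (a, b) ∉ F}.ncard.factorial := by
  choose! f hf using fun a (h : ∃ b, (a, b) ∈ F) => h
  have hsets : {σ : Equiv.Perm V | F ⊆ ApermSet σ} =
      {σ | ∀ a ∈ {a | ∃ b, (a, b) ∈ F}, σ a = f a} := by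
    ext σ
    refine ⟨fun h a ha => mem_ApermSet.mp (h (hf a ha)), fun h ⟨a, b⟩ hab => ?_⟩
    rw [mem_ApermSet, h a ⟨b, hab⟩, hright (hf a ⟨b, hab⟩) hab]
  have hinj : Set.InjOn f {a | ∃ b, (a, b) ∈ F} := fun a ha a' ha' h =>
    hleft (hf a ha) (h ▸ hf a' ha')
  rw [hsets, Equiv.Perm.ncard_setOf_forall_mem_apply_eq hinj]
  simp only [Set.compl_ofPred, not_exists]

section arcsList

variable {V : Type} {p : List V} {a b c : V}

theorem mem_arcsList_iff :
    (a, b) ∈ arcsList p ↔ ∃ (i : ℕ) (h : i + 1 < p.length), p[i] = a ∧ p[i + 1] = b := by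
  simp only [arcsList, Set.mem_ofPred_eq, List.mem_iff_getElem, List.length_zip,
    List.length_tail, List.getElem_zip, List.getElem_tail, Prod.mk.injEq]
  exact ⟨fun ⟨i, _, h⟩ => ⟨i, by omega, h⟩, fun ⟨i, _, h⟩ => ⟨i, by omega, h⟩⟩

theorem fst_mem_of_mem_arcsList (h : (a, b) ∈ arcsList p) : a ∈ p := by
  obtain ⟨i, hi, rfl, -⟩ := mem_arcsList_iff.mp h
  exact List.getElem_mem _

theorem snd_mem_of_mem_arcsList (h : (a, b) ∈ arcsList p) : b ∈ p := by
  obtain ⟨i, hi, -, rfl⟩ := mem_arcsList_iff.mp h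
  exact List.getElem_mem _

theorem List.Nodup.arcsList_right_unique (hp : p.Nodup) (hb : (a, b) ∈ arcsList p)
    (hc : (a, c) ∈ arcsList p) : b = c := by
  obtain ⟨i, hi, rfl, rfl⟩ := mem_arcsList_iff.mp hb
  obtain ⟨j, hj, hji, rfl⟩ := mem_arcsList_iff.mp hc
  obtain rfl : j = i := hp.getElem_inj_iff.mp hji
  rfl

theorem List.Nodup.arcsList_left_unique (hp : p.Nodup) (ha : (a, c) ∈ arcsList p)
    (hb : (b, c) ∈ arcsList p) : a = b := by
  obtain ⟨i, hi, rfl, hic⟩ := mem_arcsList_iff.mp ha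
  obtain ⟨j, hj, rfl, hjc⟩ := mem_arcsList_iff.mp hb
  obtain rfl : i = j := by simpa using hp.getElem_inj_iff.mp (hic.trans hjc.symm)
  rfl

theorem List.Nodup.fst_ne_getLast_of_mem_arcsList (hp : p.Nodup) (hne : p ≠ [])
    (h : (a, b) ∈ arcsList p) : a ≠ p.getLast hne := by
  obtain ⟨i, hi, rfl, -⟩ := mem_arcsList_iff.mp h
  rw [List.getLast_eq_getElem, Ne, hp.getElem_inj_iff]
  omega

theorem exists_mem_arcsList_of_ne_getLast (hne : p ≠ []) (ha : a ∈ p)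
    (hlast : a ≠ p.getLast hne) : ∃ b, (a, b) ∈ arcsList p := by
  obtain ⟨i, hi, rfl⟩ := List.mem_iff_getElem.mp ha
  have hi' : i + 1 < p.length := by
    by_contra
    exact hlast (by rw [List.getLast_eq_getElem]; congr 1; omega)
  exact ⟨p[i + 1], mem_arcsList_iff.mpr ⟨i, hi', rfl, rfl⟩⟩

end arcsList

theorem mem_arcsCover {V : Type} {C : Set (List V)} {a b : V} :
    (a, b) ∈ arcsCover C ↔ ∃ p ∈ C, (a, b) ∈ arcsList p := by
  simp only [arcsCover, Set.mem_iUnion, exists_prop]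

namespace IsPathCover

variable {V : Type} {C : Set (List V)} (hC : IsPathCover V C)
include hC

theorem eq_of_mem_of_mem {p q : List V} {v : V} (hp : p ∈ C) (hq : q ∈ C) (hvp : v ∈ p)
    (hvq : v ∈ q) : p = q :=
  (hC.2 v).unique ⟨hp, hvp⟩ ⟨hq, hvq⟩

theorem arcsCover_right_unique {a b c : V} (hb : (a, b) ∈ arcsCover C)
    (hc : (a, c) ∈ arcsCover C) : b = c := by
  obtain ⟨p, hp, hb⟩ := mem_arcsCover.mp hb
  obtain ⟨q, hq, hc⟩ := mem_arcsCover.mp hc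
  obtain rfl := hC.eq_of_mem_of_mem hp hq (fst_mem_of_mem_arcsList hb)
    (fst_mem_of_mem_arcsList hc)
  exact (hC.1 p hp).2.arcsList_right_unique hb hc

theorem arcsCover_left_unique {a b c : V} (ha : (a, c) ∈ arcsCover C)
    (hb : (b, c) ∈ arcsCover C) : a = b := by
  obtain ⟨p, hp, ha⟩ := mem_arcsCover.mp ha
  obtain ⟨q, hq, hb⟩ := mem_arcsCover.mp hb
  obtain rfl := hC.eq_of_mem_of_mem hp hq (snd_mem_of_mem_arcsList ha)
    (snd_mem_of_mem_arcsList hb)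
  exact (hC.1 p hp).2.arcsList_left_unique ha hb

theorem getLast_eq_iff {p : List V} (hp : p ∈ C) (a : V) :
    p.getLast (hC.1 p hp).1 = a ↔ a ∈ p ∧ ∀ b, (a, b) ∉ arcsCover C := by
  constructor
  · rintro rfl
    refine ⟨List.getLast_mem _, fun b hb => ?_⟩
    obtain ⟨q, hq, hb⟩ := mem_arcsCover.mp hb
    obtain rfl := hC.eq_of_mem_of_mem hq hp (fst_mem_of_mem_arcsList hb) (List.getLast_mem _)
    exact (hC.1 q hq).2.fst_ne_getLast_of_mem_arcsList _ hb rfl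
  · rintro ⟨hap, hsink⟩
    by_contra hne
    obtain ⟨b, hb⟩ := exists_mem_arcsList_of_ne_getLast _ hap (Ne.symm hne)
    exact hsink b (mem_arcsCover.mpr ⟨p, hp, hb⟩)

theorem ncard_setOf_forall_notMem_arcsCover :
    {a | ∀ b, (a, b) ∉ arcsCover C}.ncard = C.ncard := by
  symm
  refine Set.ncard_congr (fun p hp => p.getLast (hC.1 p hp).1)
    (fun p hp => ((hC.getLast_eq_iff hp _).mp rfl).2)
    (fun p q hp hq h => hC.eq_of_mem_of_mem hp hq (List.getLast_mem _)
      (h.symm ▸ List.getLast_mem _)) fun a ha => ?_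
  obtain ⟨p, ⟨hp, hap⟩, -⟩ := hC.2 a
  exact ⟨p, hp, (hC.getLast_eq_iff hp a).mpr ⟨hap, ha⟩⟩

end IsPathCover

/-- **Proposition.** If `F = Arcs C` for a path cover `C` of `V`, then there are exactly
`|C|!` many permutations `σ` of `V` with `F ⊆ A_σ`. -/
theorem count_perms_above_linear (V : Type) [Fintype V]
    (F : Set (V × V)) (C : Set (List V)) (hC : IsPathCover V C) (hF : F = arcsCover C) :
    Set.ncard {σ : Equiv.Perm V | F ⊆ ApermSet σ} = (Set.ncard C).factorial := by
  subst hF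
  rw [ncard_setOf_subset_ApermSet hC.arcsCover_right_unique hC.arcsCover_left_unique,
    hC.ncard_setOf_forall_notMem_arcsCover]
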